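/- Let Δ be a simply-laced root system with simple roots α_i, α_k satisfying (α_i,α_k) = −1 (i.e. a_{ik} = −1). Suppose w = x·s_i·s_k in the Weyl group with l(w) = l(x) + 2. Then Δ⁺ ∩ w⁻¹(Δ⁻) = s_k s_i(Δ⁺ ∩ x⁻¹(Δ⁻)) ⊔ {α_k, α_i + α_k}, a disjoint union. Consequently, setting a(w,i) = (1/2)∑_{α∈Δ⁺∩w⁻¹Δ⁻}(α_i,α)², one has a(w,i) = a(x,k) + 1 whenever additionally x(α_k) is a simple root. -/

import Mathlib

open scoped InnerProductSpace Classical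

structure RootSystemData (V : Type*) [NormedAddCommGroup V] [InnerProductSpace ℝ V]
    (I : Type*) [Fintype I] : Type _ where
  roots : Finset V
  simple : I → V
  simple_mem : ∀ i, simple i ∈ roots
  zero_notMem : (0 : V) ∉ roots
  neg_mem : ∀ α ∈ roots, -α ∈ roots
  reflect_mem : ∀ α ∈ roots, ∀ β ∈ roots, β - (2 * ⟪β, α⟫_ℝ / ⟪α, α⟫_ℝ) • α ∈ roots
  pairing_int : ∀ α ∈ roots, ∀ β ∈ roots, ∃ n : ℤ, 2 * ⟪β, α⟫_ℝ / ⟪α, α⟫_ℝ = (n : ℝ)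
  indep : LinearIndependent ℝ simple
  span_eq : Submodule.span ℝ (Set.range simple) = ⊤
  pos_or_neg : ∀ α ∈ roots,
    (∃ c : I → ℕ, α = ∑ i, (c i : ℝ) • simple i) ∨
    (∃ c : I → ℕ, α = -(∑ i, (c i : ℝ) • simple i))

namespace RootSystemData

variable {V : Type*} [NormedAddCommGroup V] [InnerProductSpace ℝ V]
  {I : Type*} [Fintype I]

noncomputable def posRoots (R : RootSystemData V I) : Finset V :=
  R.roots.filter fun α => ∃ c : I → ℕ, α = ∑ i, (c i : ℝ) • R.simple i

noncomputable def negRoots (R : RootSystemData V I) : Finset V :=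
  R.posRoots.image fun α => -α

def IsSimplyLaced (R : RootSystemData V I) : Prop :=
  ∀ α ∈ R.roots, ⟪α, α⟫_ℝ = 2

def IsIrreducible (R : RootSystemData V I) : Prop :=
  ∀ S : Set I, (∀ i ∈ S, ∀ j ∉ S, ⟪R.simple i, R.simple j⟫_ℝ = 0) → S = ∅ ∨ S = Set.univ

def HasCoxeterNumber (R : RootSystemData V I) (h : ℕ) : Prop :=
  R.roots.card = h * Fintype.card I

def IsFundamental (R : RootSystemData V I) (fw : I → V) : Prop :=
  ∀ i j, ⟪fw i, R.simple j⟫_ℝ = if i = j then 1 else 0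

noncomputable def refl [FiniteDimensional ℝ V] (R : RootSystemData V I) (i : I) :
    V ≃ₗᵢ[ℝ] V :=
  Submodule.reflection (ℝ ∙ R.simple i)ᗮ

noncomputable def weylGroup [FiniteDimensional ℝ V] (R : RootSystemData V I) :
    Subgroup (V ≃ₗᵢ[ℝ] V) :=
  Subgroup.closure (Set.range R.refl)

noncomputable def inversions [FiniteDimensional ℝ V] (R : RootSystemData V I)
    (w : V ≃ₗᵢ[ℝ] V) : Finset V :=
  R.posRoots.filter fun α => w α ∈ R.negRoots

end RootSystemData

/-!
Right multiplication by a simple reflection changes an inversion set by the root `α_k` only: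
`s_k` permutes `Δ⁺ \ {α_k}`, so the inversion set of `u s_k` is `s_k` of that of `u` with `α_k`
added when `α_k` is not an inversion of `u` and removed when it is. The length hypothesis forces
both steps `x → x s_i → x s_i s_k` to be of the first kind, which gives the decomposition, and the
union is disjoint because the count grows by exactly two. For the sum, `s_i s_k α_i = α_k` and
reflections are isometries, so `(α_i, s_k s_i γ) = (α_k, γ)`; the two new roots contribute
`(α_i, α_k)² + (α_i, α_i + α_k)² = 2`.
-/

namespace RootSystemData

variable {V : Type*} [NormedAddCommGroup V] [InnerProductSpace ℝ V] {I : Type*} [Fintype I]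
  (R : RootSystemData V I)

variable {R} in
lemma mem_posRoots {α : V} :
    α ∈ R.posRoots ↔ α ∈ R.roots ∧ ∃ c : I → ℕ, α = ∑ j, (c j : ℝ) • R.simple j :=
  Finset.mem_filter

variable {R} in
lemma mem_negRoots {α : V} : α ∈ R.negRoots ↔ -α ∈ R.posRoots := by
  simp only [negRoots, Finset.mem_image]
  exact ⟨by rintro ⟨β, hβ, rfl⟩; simpa, fun h => ⟨-α, h, neg_neg α⟩⟩

lemma simple_mem_posRoots (k : I) : R.simple k ∈ R.posRoots := by
  refine mem_posRoots.mpr ⟨R.simple_mem k, Pi.single k 1, ?_⟩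
  simp [Pi.single_apply]

lemma coeff_eq_of_sum_smul_simple_eq {f g : I → ℝ}
    (h : ∑ j, f j • R.simple j = ∑ j, g j • R.simple j) (j : I) : f j = g j :=
  Fintype.linearIndependent_iffₛ.mp R.indep f g h j

lemma neg_sum_smul_simple (d : I → ℕ) :
    -∑ j, (d j : ℝ) • R.simple j = ∑ j, (-(d j : ℝ)) • R.simple j := by
  simp only [neg_smul, Finset.sum_neg_distrib]

lemma mem_posRoots_of_coeff_pos {γ : V} (hγ : γ ∈ R.roots) {f : I → ℝ}
    (hf : γ = ∑ j, f j • R.simple j) {j : I} (hj : 0 < f j) : γ ∈ R.posRoots := by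
  rcases R.pos_or_neg γ hγ with ⟨c, hc⟩ | ⟨d, hd⟩
  · exact mem_posRoots.mpr ⟨hγ, c, hc⟩
  · have hfd := R.coeff_eq_of_sum_smul_simple_eq (hf ▸ hd.trans (R.neg_sum_smul_simple d)) j
    linarith [(d j).cast_nonneg (α := ℝ)]

variable {R} in
lemma neg_notMem_posRoots {α : V} (hα : α ∈ R.posRoots) : -α ∉ R.posRoots := by
  intro hneg
  obtain ⟨hroot, c, hc⟩ := mem_posRoots.mp hα
  obtain ⟨-, d, hd⟩ := mem_posRoots.mp hneg
  have hcd := R.coeff_eq_of_sum_smul_simple_eq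
    (hc.symm.trans ((neg_eq_iff_eq_neg.mp hd).trans (R.neg_sum_smul_simple d)))
  have hc0 : ∀ j, (c j : ℝ) = 0 := fun j => by
    linarith [hcd j, (c j).cast_nonneg (α := ℝ), (d j).cast_nonneg (α := ℝ)]
  have hα0 : α = 0 := by simp [hc, hc0]
  exact R.zero_notMem (hα0 ▸ hroot)

variable {R} in
lemma mem_negRoots_iff_notMem_posRoots {α : V} (hα : α ∈ R.roots) :
    α ∈ R.negRoots ↔ α ∉ R.posRoots := by
  refine ⟨fun hn hp => neg_notMem_posRoots hp (mem_negRoots.mp hn), fun hp => ?_⟩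
  rcases R.pos_or_neg α hα with ⟨c, hc⟩ | ⟨c, hc⟩
  · exact absurd (mem_posRoots.mpr ⟨hα, c, hc⟩) hp
  · exact mem_negRoots.mpr (mem_posRoots.mpr ⟨R.neg_mem α hα, c, neg_eq_iff_eq_neg.mpr hc⟩)

lemma eq_simple_of_eq_smul_simple (hSL : R.IsSimplyLaced) {k : I} {β : V} (hβ : β ∈ R.roots)
    {t : ℕ} (ht : β = (t : ℝ) • R.simple k) : β = R.simple k := by
  have hββ : ⟪β, β⟫_ℝ = 2 := hSL β hβ
  rw [ht, real_inner_smul_left, real_inner_smul_right, hSL _ (R.simple_mem k)] at hββ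
  have ht1 : (t : ℝ) = 1 := by nlinarith [(t : ℕ).cast_nonneg (α := ℝ)]
  rw [ht, ht1, one_smul]

section Reflections

variable [FiniteDimensional ℝ V]

lemma refl_apply (hSL : R.IsSimplyLaced) (k : I) (v : V) :
    R.refl k v = v - ⟪v, R.simple k⟫_ℝ • R.simple k := by
  have hnorm : ‖R.simple k‖ ^ 2 = 2 := by
    rw [← real_inner_self_eq_norm_sq]; exact hSL _ (R.simple_mem k)
  rw [refl, Submodule.reflection_orthogonal_apply, Submodule.reflection_singleton_apply]
  simp only [RCLike.ofReal_real_eq_id, id_eq, hnorm, real_inner_comm (R.simple k) v]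
  match_scalars <;> ring

lemma refl_refl (k : I) (v : V) : R.refl k (R.refl k v) = v :=
  Submodule.reflection_reflection _ v

lemma refl_simple_self (k : I) : R.refl k (R.simple k) = -R.simple k :=
  Submodule.reflection_orthogonalComplement_singleton_eq_neg _

lemma refl_simple_of_inner_eq_neg_one (hSL : R.IsSimplyLaced) {i k : I}
    (hik : ⟪R.simple i, R.simple k⟫_ℝ = -1) : R.refl k (R.simple i) = R.simple i + R.simple k := by
  rw [R.refl_apply hSL, hik, neg_one_smul, sub_neg_eq_add]

lemma mem_image_refl_iff {k : I} {s : Finset V} {β : V} :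
    β ∈ s.image (R.refl k) ↔ R.refl k β ∈ s :=
  ⟨fun h => by obtain ⟨γ, hγ, rfl⟩ := Finset.mem_image.mp h; rwa [R.refl_refl], fun h => Finset.mem_image.mpr ⟨_, h, R.refl_refl k β⟩⟩

lemma refl_mem_roots (hSL : R.IsSimplyLaced) (k : I) {α : V} (hα : α ∈ R.roots) :
    R.refl k α ∈ R.roots := by
  have h := R.reflect_mem (R.simple k) (R.simple_mem k) α hα
  rwa [hSL _ (R.simple_mem k), mul_div_cancel_left₀ _ two_ne_zero, ← R.refl_apply hSL] at h

lemma apply_mem_roots_of_mem_weylGroup (hSL : R.IsSimplyLaced) {g : V ≃ₗᵢ[ℝ] V}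
    (hg : g ∈ R.weylGroup) {α : V} (hα : α ∈ R.roots) : g α ∈ R.roots := by
  induction hg using Subgroup.closure_induction'' generalizing α with
  | mem _ hs => obtain ⟨k, rfl⟩ := hs; exact R.refl_mem_roots hSL k hα
  | inv_mem _ hs =>
    obtain ⟨k, rfl⟩ := hs
    rw [refl, Submodule.reflection_inv]
    exact R.refl_mem_roots hSL k hα
  | one => exact hα
  | mul _ _ _ _ ha hb => exact ha (hb hα)

lemma refl_mem_posRoots (hSL : R.IsSimplyLaced) {k : I} {β : V} (hβ : β ∈ R.posRoots)
    (hne : β ≠ R.simple k) : R.refl k β ∈ R.posRoots := by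
  obtain ⟨hroot, c, hc⟩ := mem_posRoots.mp hβ
  obtain ⟨j, hjk, hcj⟩ : ∃ j, j ≠ k ∧ c j ≠ 0 := by
    by_contra! hc0
    refine hne (R.eq_simple_of_eq_smul_simple hSL hroot (t := c k) ?_)
    rw [hc, Finset.sum_eq_single k (fun j _ hjk => by rw [hc0 j hjk, Nat.cast_zero, zero_smul])
      (by simp)]
  refine R.mem_posRoots_of_coeff_pos (R.refl_mem_roots hSL k hroot)
    (f := fun m => c m - if m = k then ⟪β, R.simple k⟫_ℝ else 0) ?_ (j := j) ?_
  · rw [R.refl_apply hSL]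
    simp only [sub_smul, Finset.sum_sub_distrib, ← hc, ite_smul, zero_smul,
      Finset.sum_ite_eq', Finset.mem_univ, if_true]
  · simpa [hjk] using Nat.pos_of_ne_zero hcj

variable {R} in
lemma refl_ne_simple_of_mem_posRoots {k : I} {β : V} (hβ : β ∈ R.posRoots) :
    R.refl k β ≠ R.simple k := by
  intro h
  have hβk : β = -R.simple k := by rw [← R.refl_refl k β, h, R.refl_simple_self]
  exact neg_notMem_posRoots (R.simple_mem_posRoots k) (hβk ▸ hβ)

lemma refl_mem_posRoots_and_ne_iff (hSL : R.IsSimplyLaced) {k : I} {β : V} :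
    R.refl k β ∈ R.posRoots ∧ R.refl k β ≠ R.simple k ↔ β ∈ R.posRoots ∧ β ≠ R.simple k := by
  have key : ∀ γ, γ ∈ R.posRoots ∧ γ ≠ R.simple k →
      R.refl k γ ∈ R.posRoots ∧ R.refl k γ ≠ R.simple k := fun γ ⟨hγ, hne⟩ =>
    ⟨R.refl_mem_posRoots hSL hγ hne, refl_ne_simple_of_mem_posRoots hγ⟩
  exact ⟨fun h => R.refl_refl k β ▸ key _ h, key β⟩

variable {R} in
lemma mem_inversions {u : V ≃ₗᵢ[ℝ] V} {β : V} :
    β ∈ R.inversions u ↔ β ∈ R.posRoots ∧ u β ∈ R.negRoots :=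
  Finset.mem_filter

lemma erase_inversions_mul_refl (hSL : R.IsSimplyLaced) (u : V ≃ₗᵢ[ℝ] V) (k : I) :
    (R.inversions (u * R.refl k)).erase (R.simple k)
      = ((R.inversions u).erase (R.simple k)).image (R.refl k) := by
  ext β
  have hiff := R.refl_mem_posRoots_and_ne_iff hSL (k := k) (β := β)
  simp only [R.mem_image_refl_iff, Finset.mem_erase, mem_inversions, LinearIsometryEquiv.coe_mul,
    Function.comp_apply]
  tauto

lemma simple_mem_inversions_mul_refl_iff (hSL : R.IsSimplyLaced) {u : V ≃ₗᵢ[ℝ] V}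
    (hu : u ∈ R.weylGroup) (k : I) :
    R.simple k ∈ R.inversions (u * R.refl k) ↔ R.simple k ∉ R.inversions u := by
  have hroot := R.apply_mem_roots_of_mem_weylGroup hSL hu (R.simple_mem k)
  simp only [mem_inversions, LinearIsometryEquiv.coe_mul, Function.comp_apply, R.refl_simple_self,
    map_neg, mem_negRoots, neg_neg, mem_negRoots_iff_notMem_posRoots hroot,
    R.simple_mem_posRoots k, true_and, not_not]

lemma inversions_mul_refl_of_notMem (hSL : R.IsSimplyLaced) {u : V ≃ₗᵢ[ℝ] V}
    (hu : u ∈ R.weylGroup) {k : I} (hk : R.simple k ∉ R.inversions u) :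
    R.inversions (u * R.refl k) = insert (R.simple k) ((R.inversions u).image (R.refl k)) := by
  rw [← Finset.insert_erase ((R.simple_mem_inversions_mul_refl_iff hSL hu k).mpr hk),
    R.erase_inversions_mul_refl hSL, Finset.erase_eq_of_notMem hk]

lemma card_erase_inversions_mul_refl (hSL : R.IsSimplyLaced) (u : V ≃ₗᵢ[ℝ] V) (k : I) :
    ((R.inversions (u * R.refl k)).erase (R.simple k)).card
      = ((R.inversions u).erase (R.simple k)).card := by
  rw [R.erase_inversions_mul_refl hSL, Finset.card_image_of_injective _ (R.refl k).injective]

lemma card_inversions_mul_refl_le (hSL : R.IsSimplyLaced) (u : V ≃ₗᵢ[ℝ] V) (k : I) :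
    (R.inversions (u * R.refl k)).card ≤ (R.inversions u).card + 1 := by
  have := R.card_erase_inversions_mul_refl hSL u k
  have := Finset.pred_card_le_card_erase (s := R.inversions (u * R.refl k)) (a := R.simple k)
  have := Finset.card_erase_le (s := R.inversions u) (a := R.simple k)
  omega

lemma simple_notMem_inversions_of_card (hSL : R.IsSimplyLaced) {u : V ≃ₗᵢ[ℝ] V}
    (hu : u ∈ R.weylGroup) {k : I}
    (hcard : (R.inversions (u * R.refl k)).card = (R.inversions u).card + 1) :
    R.simple k ∉ R.inversions u := by
  intro hk
  have hk' := mt (R.simple_mem_inversions_mul_refl_iff hSL hu k).mp (not_not.mpr hk)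
  have := R.card_erase_inversions_mul_refl hSL u k
  rw [Finset.erase_eq_of_notMem hk'] at this
  have := Finset.card_erase_add_one hk
  omega

lemma inner_simple_refl_refl (hSL : R.IsSimplyLaced) {i k : I}
    (hik : ⟪R.simple i, R.simple k⟫_ℝ = -1) (γ : V) :
    ⟪R.simple i, R.refl k (R.refl i γ)⟫_ℝ = ⟪R.simple k, γ⟫_ℝ := by
  have hki : ⟪R.simple k, R.simple i⟫_ℝ = -1 := by rw [real_inner_comm]; exact hik
  have hsisk : R.refl i (R.refl k (R.simple i)) = R.simple k := by
    rw [R.refl_simple_of_inner_eq_neg_one hSL hik, map_add, R.refl_simple_self,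
      R.refl_simple_of_inner_eq_neg_one hSL hki]
    abel
  calc ⟪R.simple i, R.refl k (R.refl i γ)⟫_ℝ
      = ⟪R.refl i (R.refl k (R.simple i)), R.refl i (R.refl k (R.refl k (R.refl i γ)))⟫_ℝ := by
        rw [LinearIsometryEquiv.inner_map_map, LinearIsometryEquiv.inner_map_map]
    _ = ⟪R.simple k, γ⟫_ℝ := by rw [hsisk, R.refl_refl, R.refl_refl]

end Reflections

end RootSystemData

theorem stmt15_general {V : Type*} [NormedAddCommGroup V] [InnerProductSpace ℝ V] [FiniteDimensional ℝ V]
    {I : Type*} [Fintype I] (R : RootSystemData V I)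
    (hSL : R.IsSimplyLaced)
    (w x : V ≃ₗᵢ[ℝ] V) (hxW : x ∈ R.weylGroup)
    (i k : I) (hik : ⟪R.simple i, R.simple k⟫_ℝ = -1)
    (hw : w = x * R.refl i * R.refl k)
    (hlen : (R.inversions w).card = (R.inversions x).card + 2) :
    (R.inversions w = (R.inversions x).image (fun α => R.refl k (R.refl i α))
        ∪ {R.simple k, R.simple i + R.simple k})
    ∧ Disjoint ((R.inversions x).image (fun α => R.refl k (R.refl i α)))
        ({R.simple k, R.simple i + R.simple k} : Finset V)
    ∧ R.simple k ≠ R.simple i + R.simple k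
    ∧ ((∃ j, x (R.simple k) = R.simple j) →
        (∑ α ∈ R.inversions w, ⟪R.simple i, α⟫_ℝ ^ 2) / 2
          = (∑ α ∈ R.inversions x, ⟪R.simple k, α⟫_ℝ ^ 2) / 2 + 1) := by
  set A := (R.inversions x).image (fun α => R.refl k (R.refl i α))
  have huW : x * R.refl i ∈ R.weylGroup := mul_mem hxW (Subgroup.subset_closure ⟨i, rfl⟩)
  have hle₁ := R.card_inversions_mul_refl_le hSL x i
  have hle₂ := R.card_inversions_mul_refl_le hSL (x * R.refl i) k
  rw [← hw] at hle₂
  have hi := R.simple_notMem_inversions_of_card hSL hxW (k := i) (by omega)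
  have hk := R.simple_notMem_inversions_of_card hSL huW (k := k) (by rw [← hw]; omega)
  have hEq : R.inversions w = A ∪ {R.simple k, R.simple i + R.simple k} := by
    rw [hw, R.inversions_mul_refl_of_notMem hSL huW hk, R.inversions_mul_refl_of_notMem hSL hxW hi,
      Finset.image_insert, R.refl_simple_of_inner_eq_neg_one hSL hik, Finset.image_image]
    ext; simp only [A, Finset.mem_insert, Finset.mem_union, Finset.mem_singleton,
      Function.comp_def]; tauto
  have hcardA : A.card = (R.inversions x).card :=
    Finset.card_image_of_injective _ ((R.refl k).injective.comp (R.refl i).injective)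
  have hdisj : Disjoint A {R.simple k, R.simple i + R.simple k} := by
    have hunion := Finset.card_union_le A {R.simple k, R.simple i + R.simple k}
    have := Finset.card_le_two (a := R.simple k) (b := R.simple i + R.simple k)
    rw [← hEq] at hunion
    refine Finset.card_union_eq_card_add_card.mp ?_
    rw [← hEq]
    omega
  have hne : R.simple k ≠ R.simple i + R.simple k := fun h =>
    R.zero_notMem (add_eq_right.mp h.symm ▸ R.simple_mem i)
  refine ⟨hEq, hdisj, hne, fun _ => ?_⟩
  rw [hEq, Finset.sum_union hdisj, Finset.sum_pair hne,
    Finset.sum_image fun a _ b _ h => (R.refl i).injective ((R.refl k).injective h)]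
  simp only [R.inner_simple_refl_refl hSL hik, inner_add_right, hik, hSL _ (R.simple_mem i)]
  ring

/-- in a simply-laced root system with `(α_i,α_k) = −1`, if `w = x·s_i·s_k` with
`l(w) = l(x) + 2`, then `Δ⁺ ∩ w⁻¹(Δ⁻) = s_k s_i(Δ⁺ ∩ x⁻¹(Δ⁻)) ⊔ {α_k, α_i + α_k}` disjointly;
consequently, with `a(w,i) = (1/2)∑_{α∈Δ⁺∩w⁻¹Δ⁻}(α_i,α)²`, one has `a(w,i) = a(x,k) + 1`
whenever `x(α_k)` is a simple root. -/
theorem stmt15 {V : Type*} [NormedAddCommGroup V] [InnerProductSpace ℝ V] [FiniteDimensional ℝ V]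
    {I : Type*} [Fintype I] (R : RootSystemData V I)
    (hSL : R.IsSimplyLaced)
    (w x : V ≃ₗᵢ[ℝ] V) (hwW : w ∈ R.weylGroup) (hxW : x ∈ R.weylGroup)
    (i k : I) (hik : ⟪R.simple i, R.simple k⟫_ℝ = -1)
    (hw : w = x * R.refl i * R.refl k)
    (hlen : (R.inversions w).card = (R.inversions x).card + 2) :
    (R.inversions w = (R.inversions x).image (fun α => R.refl k (R.refl i α))
        ∪ {R.simple k, R.simple i + R.simple k})
    ∧ Disjoint ((R.inversions x).image (fun α => R.refl k (R.refl i α)))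
        ({R.simple k, R.simple i + R.simple k} : Finset V)
    ∧ R.simple k ≠ R.simple i + R.simple k
    ∧ ((∃ j, x (R.simple k) = R.simple j) →
        (∑ α ∈ R.inversions w, ⟪R.simple i, α⟫_ℝ ^ 2) / 2
          = (∑ α ∈ R.inversions x, ⟪R.simple k, α⟫_ℝ ^ 2) / 2 + 1) :=
  stmt15_general R hSL w x hxW i k hik hw hlen
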